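/- arXiv:0709.2868 — 3 statements merged into one kernel-verified Lean document; each statement's English description precedes it below -/
import Mathlib

section
/- Let f be an irreducible polynomial over ℚ of prime degree p ≥ 5 that has at least one non-real complex root. If f is solvable by radicals, then f has exactly one real root, and the Galois group Gal(f/ℚ), acting on the p roots of f in ℂ, is a Frobenius group of degree p: the action is transitive, some point stabilizer is nontrivial, and every non-identity element of Gal(f/ℚ) fixes at most one root. -/
/-!
By Abel–Ruffini the Galois group `G` is solvable; it acts transitively on the `p` complex roots.
The last nontrivial term `N` of its derived series is an abelian normal subgroup. Since `p` is
prime the action is primitive, so `N` is transitive, hence regular (being abelian), hence cyclic of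
order `p`. If `g ≠ 1` fixed roots `x ≠ y`, conjugation by `g` would fix the unique `n ∈ N` with
`n • x = y`, so `g` would centralize `⟨n⟩ = N` and fix every root. Complex conjugation pairs off
the non-real roots, so the number of real roots is odd; it is a nontrivial element fixing every
real root, so there is exactly one.
-/

open Polynomial MulAction

attribute [local instance] Polynomial.Gal.splits_ℚ_ℂ

theorem Group.IsSolvable.exists_normal_isMulCommutative_ne_bot (G : Type*) [Group G]
    [Group.IsSolvable G] [Nontrivial G] :
    ∃ N : Subgroup G, N.Normal ∧ IsMulCommutative N ∧ N ≠ ⊥ := by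
  classical
  have hex : ∃ n, derivedSeries G n = ⊥ := Group.IsSolvable.solvable
  obtain ⟨n, hn⟩ : ∃ n, Nat.find hex = n + 1 := Nat.exists_eq_succ_of_ne_zero fun h0 => by
    simpa [h0] using Nat.find_spec hex
  refine ⟨derivedSeries G n, derivedSeries_normal G n, ?_, Nat.find_min hex (by omega)⟩
  rw [← Subgroup.le_centralizer_iff_isMulCommutative,
    ← Subgroup.commutator_eq_bot_iff_le_centralizer, ← derivedSeries_succ, ← hn]
  exact Nat.find_spec hex

namespace MulAction

variable {G α : Type*} [Group G] [MulAction G α]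

theorem eq_one_of_smul_eq_self_of_forall_commute [FaithfulSMul G α] {N : Subgroup G}
    [IsPretransitive N α] {g : G} (hcomm : ∀ n ∈ N, Commute g n) {x : α} (hx : g • x = x) :
    g = 1 := by
  refine FaithfulSMul.eq_of_smul_eq_smul (α := α) fun y => ?_
  obtain ⟨n, rfl⟩ := exists_smul_eq N x y
  rw [one_smul, Subgroup.smul_def, ← mul_smul, (hcomm n n.2).eq, mul_smul, hx]

theorem isPretransitive_of_normal_of_prime_card [FaithfulSMul G α] [IsPretransitive G α]
    (hp : (Nat.card α).Prime) {N : Subgroup G} [N.Normal] (hN : N ≠ ⊥) : IsPretransitive N α := by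
  have := IsPreprimitive.of_prime_card (G := G) hp
  refine IsQuasiPreprimitive.isPretransitive_of_normal fun hfix => hN ?_
  rw [Subgroup.eq_bot_iff_forall]
  exact fun n hn => FaithfulSMul.eq_of_smul_eq_smul fun x => by
    rw [one_smul]; exact Set.eq_univ_iff_forall.mp hfix x ⟨n, hn⟩

theorem isCancelSMul_of_isMulCommutative [FaithfulSMul G α] (N : Subgroup G) [IsMulCommutative N]
    [IsPretransitive N α] : IsCancelSMul N α :=
  isCancelSMul_iff_eq_one_of_smul_eq.mpr fun n _ hx => Subtype.ext <|
    eq_one_of_smul_eq_self_of_forall_commute (fun _ hm => setLike_mul_comm n.2 hm) hx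

theorem natCard_eq_of_isCancelSMul [IsPretransitive G α] [IsCancelSMul G α] (x : α) :
    Nat.card G = Nat.card α :=
  Nat.card_eq_of_bijective (· • x)
    ⟨fun _ _ h => IsCancelSMul.right_cancel _ _ x h, fun y => exists_smul_eq G x y⟩

theorem subsingleton_fixedBy_of_isSolvable_of_prime_card [Group.IsSolvable G] [FaithfulSMul G α]
    [IsPretransitive G α] (hp : (Nat.card α).Prime) {g : G} (hg : g ≠ 1) :
    (fixedBy α g).Subsingleton := by
  intro x hx y hy
  have : Nontrivial G := ⟨⟨g, 1, hg⟩⟩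
  obtain ⟨N, hNnormal, hNcomm, hN⟩ := Group.IsSolvable.exists_normal_isMulCommutative_ne_bot G
  have := isPretransitive_of_normal_of_prime_card hp hN
  have := isCancelSMul_of_isMulCommutative (α := α) N
  have : Fact (Nat.card α).Prime := ⟨hp⟩
  obtain ⟨n, hn⟩ := exists_smul_eq N x y
  by_contra hxy
  have hn1 : n ≠ 1 := by
    rintro rfl
    exact hxy (by rwa [one_smul] at hn)
  -- conjugation by `g` preserves `N` and fixes the unique element of `N` sending `x` to `y`
  have hgn : Commute g n := by
    have hconj : g * n * g⁻¹ ∈ N := hNnormal.conj_mem n n.2 g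
    have : (⟨g * n * g⁻¹, hconj⟩ : N) = n := IsCancelSMul.right_cancel _ _ x <| by
      rw [Subgroup.mk_smul, mul_smul, mul_smul, inv_smul_eq_iff.mpr hx.symm, ← Subgroup.smul_def,
        hn, hy]
    exact mul_inv_eq_iff_eq_mul.mp (congrArg Subtype.val this)
  refine hg (eq_one_of_smul_eq_self_of_forall_commute (N := N) (fun m hm => ?_) hx)
  obtain ⟨k, hk⟩ := mem_zpowers_of_prime_card (natCard_eq_of_isCancelSMul x) hn1 (g' := ⟨m, hm⟩)
  have hkm : (n : G) ^ k = m := congrArg Subtype.val hk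
  exact hkm ▸ hgn.zpow_right k

end MulAction

set_option linter.deprecated false in
theorem IsSolvableByRad.mem_solvableByRad {F E : Type*} [Field F] [Field E] [Algebra F E] {x : E}
    (hx : IsSolvableByRad F x) : x ∈ solvableByRad F E := by
  induction hx with
  | base a => exact IntermediateField.algebraMap_mem _ a
  | add _ _ _ _ ha hb => exact add_mem ha hb
  | neg _ _ ha => exact neg_mem ha
  | mul _ _ _ _ ha hb => exact mul_mem ha hb
  | inv _ _ ha => exact inv_mem ha
  | rad _ _ hn _ ha => exact solvableByRad.rad_mem hn ha

namespace Polynomial.Gal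

instance {F E : Type*} [Field F] [Field E] [Algebra F E] (f : F[X])
    [Fact ((f.map (algebraMap F E)).Splits)] : FaithfulSMul f.Gal (f.rootSet E) :=
  ⟨fun h => galActionHom_injective f E (Equiv.ext h)⟩

noncomputable def complexConj (f : ℚ[X]) : f.Gal :=
  restrict f ℂ (Complex.conjAe.restrictScalars ℚ)

theorem coe_complexConj_smul (f : ℚ[X]) (z : f.rootSet ℂ) :
    ((complexConj f • z : f.rootSet ℂ) : ℂ) = starRingEnd ℂ z :=
  restrict_smul _ z

theorem complexConj_sq (f : ℚ[X]) : complexConj f ^ 2 = 1 := by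
  rw [complexConj, ← map_pow, ← map_one (restrict f ℂ)]
  exact congrArg _ (AlgEquiv.ext Complex.conj_conj)

theorem complexConj_ne_one {f : ℚ[X]} {z : ℂ} (hz : z ∈ f.rootSet ℂ) (him : z.im ≠ 0) :
    complexConj f ≠ 1 := by
  intro h
  have hconj := congrArg Complex.im (coe_complexConj_smul f ⟨z, hz⟩)
  rw [h, one_smul, Complex.conj_im] at hconj
  exact him (by linarith)

theorem odd_card_rootSet_real {f : ℚ[X]} (h : Odd (Fintype.card (f.rootSet ℂ))) :
    Odd (Fintype.card (f.rootSet ℝ)) := by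
  have hsum := card_complex_roots_eq_card_real_add_card_not_gal_inv f
  have heven := Equiv.Perm.two_dvd_card_support (by
    rw [← map_pow, complexConj_sq, map_one] : (galActionHom f ℂ (complexConj f)) ^ 2 = 1)
  simp only [Set.toFinset_card] at hsum
  rw [hsum] at h
  exact (Nat.odd_add.mp h).mpr (even_iff_two_dvd.mpr heven)

noncomputable def rootSetOfReal (f : ℚ[X]) : f.rootSet ℝ → f.rootSet ℂ :=
  (rootSet_mapsTo (IsScalarTower.toAlgHom ℚ ℝ ℂ)).restrict _ _ _

theorem rootSetOfReal_injective (f : ℚ[X]) : Function.Injective (rootSetOfReal f) :=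
  (rootSet_mapsTo _).restrict_inj.mpr (algebraMap ℝ ℂ).injective.injOn

theorem complexConj_smul_rootSetOfReal (f : ℚ[X]) (r : f.rootSet ℝ) :
    complexConj f • rootSetOfReal f r = rootSetOfReal f r :=
  Subtype.ext <| (coe_complexConj_smul f _).trans (Complex.conj_ofReal r)

theorem card_rootSet_real_le_one {f : ℚ[X]}
    (h : (fixedBy (f.rootSet ℂ) (complexConj f)).Subsingleton) :
    Fintype.card (f.rootSet ℝ) ≤ 1 :=
  Fintype.card_le_one_iff_subsingleton.mpr ⟨fun r s => rootSetOfReal_injective f <|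
    h (complexConj_smul_rootSetOfReal f r) (complexConj_smul_rootSetOfReal f s)⟩

end Polynomial.Gal

/-- Let `f` be an irreducible polynomial over `ℚ` of prime degree `p ≥ 5` having at least one
non-real complex root. If `f` is solvable by radicals, then `f` has exactly one real root and
`Gal(f/ℚ)`, acting on the `p` roots of `f` in `ℂ`, is a Frobenius group of degree `p`:
the action is transitive, some point stabilizer is nontrivial, and every non-identity
element fixes at most one root. -/
theorem frobenius_of_solvable_with_complex_root
    (f : ℚ[X]) (hirr : Irreducible f) (p : ℕ) (hp : p.Prime) (hp5 : 5 ≤ p)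
    (hdeg : f.natDegree = p)
    (hcomplex : ∃ x ∈ f.rootSet ℂ, x.im ≠ 0)
    (hsolv : ∀ x ∈ f.rootSet ℂ, IsSolvableByRad ℚ x) :
    Fintype.card (f.rootSet ℝ) = 1 ∧
    (∀ x y : f.rootSet ℂ, ∃ g : f.Gal, Polynomial.Gal.galActionHom f ℂ g x = y) ∧
    (∃ (x : f.rootSet ℂ) (g : f.Gal), g ≠ 1 ∧ Polynomial.Gal.galActionHom f ℂ g x = x) ∧
    (∀ g : f.Gal, g ≠ 1 → ∀ x y : f.rootSet ℂ,
      Polynomial.Gal.galActionHom f ℂ g x = x → Polynomial.Gal.galActionHom f ℂ g y = y →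
        x = y) := by
  obtain ⟨z, hz, hzim⟩ := hcomplex
  have := isSolvable_gal_of_irreducible (hsolv z hz).mem_solvableByRad hirr (mem_rootSet.mp hz).2
  have := Gal.galAction_isPretransitive f ℂ hirr
  have hcard : Fintype.card (f.rootSet ℂ) = p :=
    hdeg ▸ card_rootSet_eq_natDegree hirr.separable (IsAlgClosed.splits _)
  have hfix : ∀ g : f.Gal, g ≠ 1 → (fixedBy (f.rootSet ℂ) g).Subsingleton := fun _ hg =>
    subsingleton_fixedBy_of_isSolvable_of_prime_card (by rwa [Nat.card_eq_fintype_card, hcard]) hg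
  have hconj := Gal.complexConj_ne_one hz hzim
  have hreal : Fintype.card (f.rootSet ℝ) = 1 := by
    obtain ⟨k, hk⟩ := Gal.odd_card_rootSet_real (hcard ▸ hp.odd_of_ne_two (by omega))
    have := Gal.card_rootSet_real_le_one (hfix _ hconj)
    omega
  obtain ⟨r⟩ : Nonempty (f.rootSet ℝ) := Fintype.card_pos_iff.mp (by omega)
  exact ⟨hreal, exists_smul_eq f.Gal,
    ⟨_, _, hconj, Gal.complexConj_smul_rootSetOfReal f r⟩, fun g hg _ _ hx hy => hfix g hg hx hy⟩
end

section
/- (Burnside) Let G be a group acting faithfully and transitively on a finite set Ω of prime cardinality p. If G is not solvable, then the action of G on Ω is 2-transitive, i.e., G acts transitively on the set of ordered pairs of distinct elements of Ω. -/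
/-!
Label `Ω` by `ZMod p` so that an element of order `p` acts as `z ↦ z + 1`, and let `G` act on the
space of functions `ZMod p → ZMod p` by precomposition. The forward difference `Δ` is nilpotent
with one-dimensional kernel, so the only translation-invariant subspaces are the spaces
`polyFun p m` of polynomial functions of degree `< m`. Suppose the stabiliser of `0` does not map
some `x ≠ 0` to some `y ≠ 0`. The indicator matrix of the orbital of `(x, 0)`, corrected by a
multiple of the identity to have zero column sums, is a `G`-equivariant operator with range
`polyFun p τ`, `2 ≤ τ ≤ p - 1`; its kernel is `polyFun p μ` with `μ = p - τ`, and the preimage of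
the constants is `polyFun p (μ + 1)`. Since `polyFun p (p - s)` is the orthogonal complement of
`polyFun p s` and `polyFun p (a + 1) * polyFun p (b + 1) = polyFun p (a + b + 1)`, the subspaces
`polyFun p (τ - 1)`, `polyFun p (p - 2)` and finally `polyFun p 2` are invariant. So `G` maps
affine functions to affine functions: it acts by maps `z ↦ a * z + b` and is solvable.
-/

open Module Matrix MulAction

namespace Module.End

variable {K V : Type*} [Field K] [AddCommGroup V] [Module K V] [FiniteDimensional K V]

theorem finrank_ker_pow_le (f : End K V) (n : ℕ) :
    finrank K (LinearMap.ker (f ^ n)) ≤ n * finrank K (LinearMap.ker f) := by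
  induction n with
  | zero => simp [Module.End.one_eq_id]
  | succ n ih =>
    have hker : LinearMap.ker (f ^ (n + 1)) = (LinearMap.ker (f ^ n)).comap f := by
      rw [pow_succ, Module.End.mul_eq_comp, LinearMap.ker_comp]
    have hrank := LinearMap.lift_rank_comap_le (f := f) (LinearMap.ker (f ^ n))
    simp only [Cardinal.lift_id, ← finrank_eq_rank] at hrank
    norm_cast at hrank
    rw [hker, add_mul, one_mul]
    omega

theorem _root_.IsNilpotent.pow_finrank_eq_zero {f : End K V} (hf : IsNilpotent f) :
    f ^ finrank K V = 0 := by
  simpa only [hf.charpoly_eq_X_pow_finrank, map_pow, Polynomial.aeval_X] using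
    f.aeval_self_charpoly

theorem eq_ker_pow_finrank_of_mapsTo {f : End K V} (hf : IsNilpotent f)
    (hker : finrank K (LinearMap.ker f) ≤ 1) {W : Submodule K V} (hW : ∀ x ∈ W, f x ∈ W) :
    W = LinearMap.ker (f ^ finrank K W) := by
  have hzero := (isNilpotent.restrict hW hf).pow_finrank_eq_zero
  rw [Module.End.pow_restrict] at hzero
  have hle : W ≤ LinearMap.ker (f ^ finrank K W) := fun x hx =>
    congr_arg Subtype.val (LinearMap.congr_fun hzero ⟨x, hx⟩)
  refine Submodule.eq_of_le_of_finrank_le hle ?_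
  calc finrank K (LinearMap.ker (f ^ finrank K W))
      ≤ finrank K W * finrank K (LinearMap.ker f) := finrank_ker_pow_le f _
    _ ≤ finrank K W := mul_le_of_le_one_right (Nat.zero_le _) hker

end Module.End

section DotOrth

variable {K ι : Type*} [Fintype ι]

def dotOrth [CommSemiring K] (W : Submodule K (ι → K)) : Submodule K (ι → K) where
  carrier := {f | ∀ g ∈ W, g ⬝ᵥ f = 0}
  add_mem' hf hf' g hg := by rw [dotProduct_add, hf g hg, hf' g hg, add_zero]
  zero_mem' g _ := dotProduct_zero g
  smul_mem' c f hf g hg := by rw [dotProduct_smul, hf g hg, smul_zero]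

theorem mem_dotOrth [CommSemiring K] {W : Submodule K (ι → K)} {f : ι → K} :
    f ∈ dotOrth W ↔ ∀ g ∈ W, g ⬝ᵥ f = 0 :=
  Iff.rfl

theorem finrank_dotOrth [Field K] (W : Submodule K (ι → K)) :
    finrank K (dotOrth W) = Fintype.card ι - finrank K W := by
  classical
  let W' := W.map (dotProductEquiv K ι).toLinearMap
  have hW' : dotOrth W = W'.dualCoannihilator := by
    ext f
    simp only [W', mem_dotOrth, Submodule.mem_dualCoannihilator, Submodule.mem_map]
    simp
  have h := Subspace.finrank_add_finrank_dualCoannihilator_eq W'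
  rw [LinearEquiv.finrank_map_eq, ← hW', Module.finrank_fintype_fun_eq_card] at h
  omega

end DotOrth

section PrecompInvariant

variable (G : Type*) {α K : Type*} [Group G] [MulAction G α] [CommSemiring K]

def IsPrecompInvariant (W : Submodule K (α → K)) : Prop :=
  ∀ g : G, ∀ f ∈ W, (fun x => f (g • x)) ∈ W

variable {G} {W W' : Submodule K (α → K)}

theorem IsPrecompInvariant.mul (h : IsPrecompInvariant G W) (h' : IsPrecompInvariant G W') :
    IsPrecompInvariant G (W * W') := by
  intro g f hf
  induction hf using Submodule.mul_induction_on' with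
  | mem_mul_mem u hu v hv => exact Submodule.mul_mem_mul (h g u hu) (h' g v hv)
  | add u _ v _ hu hv => exact Submodule.add_mem _ hu hv

theorem IsPrecompInvariant.dotOrth [Fintype α] (h : IsPrecompInvariant G W) :
    IsPrecompInvariant G (dotOrth W) := by
  intro g f hf u hu
  rw [← hf _ (h g⁻¹ u hu)]
  exact Fintype.sum_equiv (toPerm g) _ _ fun x => by simp

variable {φ : Module.End K (α → K)}
  (hφ : ∀ (g : G) (f : α → K), φ (fun x => f (g • x)) = fun x => φ f (g • x))
include hφ

theorem isPrecompInvariant_range : IsPrecompInvariant G (LinearMap.range φ) := by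
  rintro g _ ⟨f, rfl⟩
  exact ⟨_, hφ g f⟩

theorem isPrecompInvariant_comap (h : IsPrecompInvariant G W) :
    IsPrecompInvariant G (W.comap φ) := by
  intro g f hf
  rw [Submodule.mem_comap, hφ]
  exact h g _ hf

theorem isPrecompInvariant_ker : IsPrecompInvariant G (LinearMap.ker φ) :=
  isPrecompInvariant_comap hφ fun g f hf => by
    rw [(Submodule.mem_bot K).1 hf]
    exact Submodule.zero_mem _

end PrecompInvariant

section InvariantMatrix

variable {G α R : Type*} [Group G] [MulAction G α] [Fintype α] [CommSemiring R]
  {M : Matrix α α R}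

theorem Matrix.mulVec_comp_smul (hM : ∀ (g : G) u w, M (g • u) (g • w) = M u w) (g : G)
    (f : α → R) : M *ᵥ (fun w => f (g • w)) = fun u => (M *ᵥ f) (g • u) := by
  ext u
  exact Fintype.sum_equiv (toPerm g) _ _ fun w => by simp [hM]

theorem Matrix.vecMul_one_eq_const [IsPretransitive G α]
    (hM : ∀ (g : G) u w, M (g • u) (g • w) = M u w) (w₀ : α) :
    1 ᵥ* M = fun _ => (1 ᵥ* M) w₀ := by
  ext w
  obtain ⟨g, rfl⟩ := exists_smul_eq G w₀ w
  exact (Fintype.sum_equiv (toPerm g) _ _ fun u => by simp [hM]).symm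

end InvariantMatrix

theorem MulAction.smul_mem_orbit_iff {G α : Type*} [Group G] [MulAction G α] {g : G}
    {a b : α} : g • a ∈ orbit G b ↔ a ∈ orbit G b := by
  rw [← orbit_eq_iff, orbit_smul, orbit_eq_iff]

theorem MulAction.exists_smul_eq_and_smul_eq_of_forall_mem_orbit {G α : Type*} [Group G]
    [MulAction G α] [IsPretransitive G α] (a₀ : α)
    (h : ∀ x y, x ≠ a₀ → y ≠ a₀ → (y, a₀) ∈ orbit G (x, a₀))
    (a b c d : α) (hab : a ≠ b) (hcd : c ≠ d) : ∃ g : G, g • a = c ∧ g • b = d := by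
  obtain ⟨g₁, hg₁⟩ := exists_smul_eq G a a₀
  obtain ⟨g₂, hg₂⟩ := exists_smul_eq G c a₀
  obtain ⟨g, hg⟩ := h (g₁ • b) (g₂ • d) (hg₁ ▸ (MulAction.injective g₁).ne hab.symm)
    (hg₂ ▸ (MulAction.injective g₂).ne hcd.symm)
  simp only [Prod.smul_mk, Prod.mk.injEq] at hg
  refine ⟨g₂⁻¹ * g * g₁, ?_, ?_⟩
  · rw [mul_smul, mul_smul, hg₁, hg.2, ← hg₂, inv_smul_smul]
  · rw [mul_smul, mul_smul, hg.1, inv_smul_smul]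

theorem MulAction.exists_minimalPeriod_eq_of_card_eq_prime {G Ω : Type*} [Group G]
    [MulAction G Ω] [Finite Ω] [FaithfulSMul G Ω] [IsPretransitive G Ω] {p : ℕ} [Fact p.Prime]
    (hΩ : Nat.card Ω = p) : ∃ (g : G) (ω : Ω), Function.minimalPeriod (g • ·) ω = p := by
  have : Finite G := Finite.of_injective _ (toPerm_injective (α := G) (β := Ω))
  obtain ⟨ω⟩ : Nonempty Ω := (Nat.card_pos_iff.1 (hΩ ▸ (Fact.out : p.Prime).pos)).1
  have hdvd : p ∣ Nat.card G :=
    hΩ ▸ index_stabilizer_of_transitive G ω ▸ (stabilizer G ω).index_dvd_card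
  obtain ⟨g, hg⟩ := exists_prime_orderOf_dvd_card' p hdvd
  obtain ⟨ω', hω'⟩ : ∃ ω' : Ω, g • ω' ≠ ω' := by
    by_contra! hfix
    have : g = 1 := eq_of_smul_eq_smul fun ω => by rw [hfix, one_smul]
    simp [this, (Fact.out : p.Prime).ne_one.symm] at hg
  refine ⟨g, ω', Function.minimalPeriod_eq_prime_iff.2 ⟨?_, hω'⟩⟩
  simp [Function.IsPeriodicPt, Function.IsFixedPt, smul_iterate, ← hg, pow_orderOf_eq_one]

theorem MulAction.exists_equiv_zmod_smul_eq_add_one {G Ω : Type*} [Group G] [MulAction G Ω]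
    [Fintype Ω] {p : ℕ} [NeZero p] {g : G} {ω : Ω}
    (hper : Function.minimalPeriod (g • ·) ω = p) (hΩ : Fintype.card Ω = p) :
    ∃ e : ZMod p ≃ Ω, ∀ i, g • e i = e (i + 1) := by
  let f (i : ZMod p) : Ω := g ^ i.val • ω
  have hinj : f.Injective := fun i j hij => by
    refine ZMod.val_injective p
      (Function.iterate_injOn_Iio_minimalPeriod (f := (g • ·)) (x := ω) ?_ ?_ ?_)
    · simpa [hper] using ZMod.val_lt i
    · simpa [hper] using ZMod.val_lt j
    · simpa [smul_iterate] using hij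
  have hbij : f.Bijective := (Fintype.bijective_iff_injective_and_card f).2 ⟨hinj, by simp [hΩ]⟩
  refine ⟨Equiv.ofBijective f hbij, fun i => ?_⟩
  simp only [Equiv.ofBijective_apply, f, smul_smul, ← pow_succ']
  rw [← pow_smul_mod_minimalPeriod, hper, ← ZMod.val_natCast, Nat.cast_succ,
    ZMod.natCast_zmod_val]

theorem isSolvable_of_forall_exists_smul_eq_mul_add {G K : Type*} [Group G] [Field K]
    [MulAction G K] [FaithfulSMul G K] (h : ∀ g : G, ∃ a b : K, ∀ z, g • z = a * z + b) :
    Group.IsSolvable G := by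
  choose a b hab using h
  have hslope (g : G) : a g = g • (1 : K) - g • (0 : K) := by simp [hab]
  have ha (g : G) : a g ≠ 0 := by
    rw [hslope, sub_ne_zero]
    exact (MulAction.injective g).ne one_ne_zero
  let χ : G →* Kˣ :=
    { toFun g := Units.mk0 (a g) (ha g)
      map_one' := by ext; simp [hslope]
      map_mul' g h := Units.ext <| by
        rw [Units.val_mul, Units.val_mk0, Units.val_mk0, Units.val_mk0, hslope (g * h),
          mul_smul, mul_smul, hab h, hab h, hab g, hab g]
        ring }
  have : Group.IsSolvable χ.ker := Group.isSolvable_of_comm fun ⟨g, hg⟩ ⟨h, hh⟩ => by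
    have hg1 : a g = 1 := congrArg Units.val hg
    have hh1 : a h = 1 := congrArg Units.val hh
    refine Subtype.ext (eq_of_smul_eq_smul (α := K) fun z => ?_)
    simp only [Subgroup.coe_mul, mul_smul]
    rw [hab h, hab g, hab g, hab h, hg1, hh1]
    ring
  exact Group.isSolvable_of_ker_le_range χ.ker.subtype χ χ.ker.range_subtype.ge

namespace ZMod

open Polynomial

variable (p : ℕ) [Fact p.Prime]

def polyFun (m : ℕ) : Submodule (ZMod p) (ZMod p → ZMod p) :=
  Submodule.span (ZMod p) (Set.range fun i : Fin m => fun x : ZMod p => x ^ (i : ℕ))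

def fwdDiffEnd : Module.End (ZMod p) (ZMod p → ZMod p) where
  toFun := fwdDiff 1
  map_add' := fwdDiff_add 1
  map_smul' := fwdDiff_const_smul 1

variable {p}

theorem finrank_fun : finrank (ZMod p) (ZMod p → ZMod p) = p := by
  simp

theorem pow_mem_polyFun {i m : ℕ} (h : i < m) : (fun x : ZMod p => x ^ i) ∈ polyFun p m :=
  Submodule.subset_span ⟨⟨i, h⟩, rfl⟩

theorem polyFun_mono {m n : ℕ} (h : m ≤ n) : polyFun p m ≤ polyFun p n :=
  Submodule.span_le.2 <| by rintro _ ⟨i, rfl⟩; exact pow_mem_polyFun (i.2.trans_le h)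

theorem mem_polyFun_iff {m : ℕ} {f : ZMod p → ZMod p} :
    f ∈ polyFun p m ↔ ∃ c : Fin m → ZMod p, f = fun x => ∑ i, c i * x ^ (i : ℕ) := by
  rw [polyFun, Submodule.mem_span_range_iff_exists_fun]
  refine exists_congr fun c => ⟨fun h => ?_, fun h => ?_⟩ <;> subst h <;> ext x <;> simp

theorem mem_polyFun_one {f : ZMod p → ZMod p} : f ∈ polyFun p 1 ↔ ∃ c, f = fun _ => c := by
  simp only [mem_polyFun_iff, Fin.sum_univ_one]
  exact ⟨fun ⟨c, h⟩ => ⟨c 0, by simpa using h⟩, fun ⟨c, h⟩ => ⟨fun _ => c, by simpa using h⟩⟩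

theorem mem_polyFun_two {f : ZMod p → ZMod p} :
    f ∈ polyFun p 2 ↔ ∃ a b, f = fun x => a * x + b := by
  simp only [mem_polyFun_iff, Fin.sum_univ_two]
  refine ⟨fun ⟨c, h⟩ => ⟨c 1, c 0, by simp [h, add_comm]⟩, fun ⟨a, b, h⟩ => ⟨![b, a], ?_⟩⟩
  simp [h, add_comm]

theorem linearIndependent_pow {m : ℕ} (hm : m ≤ p) :
    LinearIndependent (ZMod p) fun i : Fin m => fun x : ZMod p => x ^ (i : ℕ) := by
  rw [Fintype.linearIndependent_iff]
  intro c hc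
  let q := (degreeLTEquiv (ZMod p) m).symm c
  have hcq : degreeLTEquiv (ZMod p) m q = c := LinearEquiv.apply_symm_apply _ c
  suffices hq : (q : (ZMod p)[X]) = 0 by
    have hq0 : q = 0 := Subtype.ext hq
    simp [← hcq, hq0]
  by_contra hq
  refine hq <| eq_zero_of_natDegree_lt_card_of_eval_eq_zero _ Function.injective_id
    (fun x => ?_) ?_
  · rw [eval_eq_sum_degreeLTEquiv q.2, Subtype.coe_eta, hcq]
    simpa using congr_fun hc x
  · rw [ZMod.card, natDegree_lt_iff_degree_lt hq]
    exact (mem_degreeLT.1 q.2).trans_le (by exact_mod_cast hm)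

theorem finrank_polyFun {m : ℕ} (hm : m ≤ p) : finrank (ZMod p) (polyFun p m) = m :=
  (finrank_span_eq_card (linearIndependent_pow hm)).trans (Fintype.card_fin m)

theorem polyFun_self : polyFun p p = ⊤ :=
  Submodule.eq_top_of_finrank_eq ((finrank_polyFun le_rfl).trans finrank_fun.symm)

theorem polyFun_le_ker_fwdDiffEnd_pow {m : ℕ} :
    polyFun p m ≤ LinearMap.ker (fwdDiffEnd p ^ m) := by
  refine Submodule.span_le.2 ?_
  rintro _ ⟨i, rfl⟩
  rw [SetLike.mem_coe, LinearMap.mem_ker, Module.End.coe_pow]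
  exact fwdDiff_iter_pow_eq_zero_of_lt i.2

theorem ker_fwdDiffEnd_le_polyFun_one : LinearMap.ker (fwdDiffEnd p) ≤ polyFun p 1 := by
  intro f hf
  have hstep (x : ZMod p) : f (x + 1) = f x := sub_eq_zero.1 (congr_fun hf x)
  have hconst (n : ℕ) : f n = f 0 := by
    induction n with
    | zero => simp
    | succ n ih => rw [Nat.cast_succ, hstep, ih]
  exact mem_polyFun_one.2 ⟨f 0, funext fun x => natCast_zmod_val x ▸ hconst x.val⟩

theorem polyFun_eq_ker_fwdDiffEnd_pow {m : ℕ} (hm : m ≤ p) :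
    polyFun p m = LinearMap.ker (fwdDiffEnd p ^ m) := by
  refine Submodule.eq_of_le_of_finrank_le polyFun_le_ker_fwdDiffEnd_pow ?_
  have hker : finrank (ZMod p) (LinearMap.ker (fwdDiffEnd p)) ≤ 1 :=
    (Submodule.finrank_mono ker_fwdDiffEnd_le_polyFun_one).trans
      (finrank_polyFun (Fact.out : p.Prime).one_le).le
  calc finrank (ZMod p) (LinearMap.ker (fwdDiffEnd p ^ m))
      ≤ m * finrank (ZMod p) (LinearMap.ker (fwdDiffEnd p)) := Module.End.finrank_ker_pow_le _ m
    _ ≤ m := mul_le_of_le_one_right (Nat.zero_le _) hker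
    _ = _ := (finrank_polyFun hm).symm

theorem polyFun_one_eq_ker_fwdDiffEnd : polyFun p 1 = LinearMap.ker (fwdDiffEnd p) := by
  rw [polyFun_eq_ker_fwdDiffEnd_pow (Fact.out : p.Prime).one_le, pow_one]

theorem mem_polyFun_succ_iff {m : ℕ} (hm : m + 1 ≤ p) {f : ZMod p → ZMod p} :
    f ∈ polyFun p (m + 1) ↔ fwdDiffEnd p f ∈ polyFun p m := by
  rw [polyFun_eq_ker_fwdDiffEnd_pow hm, polyFun_eq_ker_fwdDiffEnd_pow (by omega),
    LinearMap.mem_ker, LinearMap.mem_ker, pow_succ, Module.End.mul_apply]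

theorem isNilpotent_fwdDiffEnd : IsNilpotent (fwdDiffEnd p) :=
  ⟨p, by rw [← LinearMap.ker_eq_top, ← polyFun_eq_ker_fwdDiffEnd_pow le_rfl, polyFun_self]⟩

theorem eq_polyFun_finrank_of_mapsTo {W : Submodule (ZMod p) (ZMod p → ZMod p)}
    (hW : ∀ f ∈ W, fwdDiffEnd p f ∈ W) : W = polyFun p (finrank (ZMod p) W) := by
  have hker : finrank (ZMod p) (LinearMap.ker (fwdDiffEnd p)) ≤ 1 := by
    rw [← polyFun_one_eq_ker_fwdDiffEnd, finrank_polyFun (Fact.out : p.Prime).one_le]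
  rw [polyFun_eq_ker_fwdDiffEnd_pow ((Submodule.finrank_le W).trans_eq finrank_fun)]
  exact Module.End.eq_ker_pow_finrank_of_mapsTo isNilpotent_fwdDiffEnd hker hW

theorem polyFun_mul (a b : ℕ) :
    polyFun p (a + 1) * polyFun p (b + 1) = polyFun p (a + b + 1) := by
  have hpow (i j : ℕ) :
      ((fun x : ZMod p => x ^ i) * fun x => x ^ j) = fun x => x ^ (i + j) := by
    ext x; simp [pow_add]
  rw [polyFun, polyFun, Submodule.span_mul_span]
  refine le_antisymm (Submodule.span_le.2 ?_) (Submodule.span_le.2 ?_)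
  · rintro _ ⟨_, ⟨i, rfl⟩, _, ⟨j, rfl⟩, rfl⟩
    beta_reduce
    rw [hpow]
    exact pow_mem_polyFun (by omega)
  · rintro _ ⟨k, rfl⟩
    refine Submodule.subset_span ⟨_, ⟨⟨min (k : ℕ) a, by omega⟩, rfl⟩, _,
      ⟨⟨k - min (k : ℕ) a, by omega⟩, rfl⟩, ?_⟩
    simp only [hpow]
    congr! 2
    omega

theorem polyFun_le_dotOrth {s : ℕ} : polyFun p (p - s) ≤ dotOrth (polyFun p s) := by
  refine Submodule.span_le.2 ?_
  rintro _ ⟨j, rfl⟩ g hg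
  obtain ⟨c, rfl⟩ := mem_polyFun_iff.1 hg
  have hj := j.2
  simp only [dotProduct, Finset.sum_mul, mul_assoc, ← pow_add]
  rw [Finset.sum_comm]
  refine Finset.sum_eq_zero fun i _ => ?_
  rw [← Finset.mul_sum, FiniteField.sum_pow_lt_card_sub_one _ _ (by rw [ZMod.card]; omega),
    mul_zero]

theorem dotOrth_polyFun {s : ℕ} (hs : s ≤ p) : dotOrth (polyFun p s) = polyFun p (p - s) := by
  refine (Submodule.eq_of_le_of_finrank_le polyFun_le_dotOrth ?_).symm
  rw [finrank_dotOrth, finrank_polyFun hs, finrank_polyFun (by omega), ZMod.card]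

theorem range_mulVecLin_le_polyFun {M : Matrix (ZMod p) (ZMod p) (ZMod p)} (hM : 1 ᵥ* M = 0) :
    LinearMap.range M.mulVecLin ≤ polyFun p (p - 1) := by
  rintro _ ⟨f, rfl⟩
  rw [← dotOrth_polyFun (Fact.out : p.Prime).one_le, mem_dotOrth]
  intro g hg
  obtain ⟨c, rfl⟩ := mem_polyFun_one.1 hg
  have hc : (fun _ => c) = c • (1 : ZMod p → ZMod p) := by ext; simp
  rw [Matrix.mulVecLin_apply, hc, smul_dotProduct, dotProduct_mulVec, hM, zero_dotProduct,
    smul_zero]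

end ZMod

open ZMod

section PolyFunInvariant

variable {p : ℕ} [Fact p.Prime] {G : Type*} [Group G] [MulAction G (ZMod p)]

theorem IsPrecompInvariant.eq_polyFun {g₀ : G} (hg₀ : ∀ z : ZMod p, g₀ • z = z + 1)
    {W : Submodule (ZMod p) (ZMod p → ZMod p)} (hW : IsPrecompInvariant G W) :
    W = polyFun p (finrank (ZMod p) W) :=
  eq_polyFun_finrank_of_mapsTo fun f hf => sub_mem (by simpa only [hg₀] using hW g₀ f hf) hf

theorem isPrecompInvariant_polyFun_one : IsPrecompInvariant G (polyFun p 1) := by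
  intro g f hf
  obtain ⟨c, rfl⟩ := mem_polyFun_one.1 hf
  exact hf

theorem IsPrecompInvariant.polyFun_sub {s : ℕ} (hs : s ≤ p)
    (h : IsPrecompInvariant G (polyFun p s)) : IsPrecompInvariant G (polyFun p (p - s)) :=
  dotOrth_polyFun hs ▸ h.dotOrth

theorem isPrecompInvariant_polyFun_two {g₀ : G} (hg₀ : ∀ z : ZMod p, g₀ • z = z + 1)
    {φ : Module.End (ZMod p) (ZMod p → ZMod p)}
    (hφ : ∀ (g : G) f, φ (fun x => f (g • x)) = fun x => φ f (g • x))
    (hrange : LinearMap.range φ ≤ polyFun p (p - 1))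
    (hconst : ¬ LinearMap.range φ ≤ polyFun p 1) :
    IsPrecompInvariant G (polyFun p 2) := by
  set τ := finrank (ZMod p) (LinearMap.range φ)
  set μ := finrank (ZMod p) (LinearMap.ker φ)
  have hR : LinearMap.range φ = polyFun p τ := (isPrecompInvariant_range hφ).eq_polyFun hg₀
  have hK : LinearMap.ker φ = polyFun p μ := (isPrecompInvariant_ker hφ).eq_polyFun hg₀
  have hτμ : τ + μ = p := φ.finrank_range_add_finrank_ker.trans finrank_fun
  have hτ_le : τ ≤ p - 1 := by
    simpa [← hR, finrank_polyFun (Nat.sub_le p 1)] using Submodule.finrank_mono hrange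
  have hτ_ge : 2 ≤ τ := by
    by_contra h
    exact hconst (hR ▸ polyFun_mono (by omega))
  have hcomm (f : ZMod p → ZMod p) : φ (fwdDiffEnd p f) = fwdDiffEnd p (φ f) := by
    have h := hφ g₀ f
    simp only [hg₀] at h
    exact (map_sub φ _ f).trans (congrArg (· - φ f) h)
  have hQ : (polyFun p 1).comap φ = polyFun p (μ + 1) := by
    ext f
    rw [Submodule.mem_comap, polyFun_one_eq_ker_fwdDiffEnd, mem_polyFun_succ_iff (m := μ)
      (by omega), ← hK, LinearMap.mem_ker, LinearMap.mem_ker, hcomm]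
  have h₁ : IsPrecompInvariant G (polyFun p (τ - 1)) := by
    have := (hQ ▸ isPrecompInvariant_comap hφ isPrecompInvariant_polyFun_one).polyFun_sub
      (s := μ + 1) (by omega)
    rwa [show p - (μ + 1) = τ - 1 by omega] at this
  have h₂ : IsPrecompInvariant G (polyFun p (p - 2)) := by
    obtain ⟨a, ha⟩ : ∃ a, μ = a + 1 := ⟨μ - 1, by omega⟩
    obtain ⟨b, hb⟩ : ∃ b, τ - 1 = b + 1 := ⟨τ - 2, by omega⟩
    have := (hK ▸ isPrecompInvariant_ker hφ).mul h₁
    rwa [ha, hb, polyFun_mul, show a + b + 1 = p - 2 by omega] at this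
  simpa [show p - (p - 2) = 2 by omega] using h₂.polyFun_sub (by omega)

theorem IsPrecompInvariant.exists_smul_eq_mul_add (h : IsPrecompInvariant G (polyFun p 2))
    (g : G) : ∃ a b : ZMod p, ∀ z, g • z = a * z + b := by
  obtain ⟨a, b, hab⟩ := mem_polyFun_two.1 (h g _ (pow_mem_polyFun (i := 1) one_lt_two))
  exact ⟨a, b, fun z => by simpa using congr_fun hab z⟩

theorem exists_smul_eq_mul_add_of_notMem_orbit [IsPretransitive G (ZMod p)] {g₀ : G}
    (hg₀ : ∀ z : ZMod p, g₀ • z = z + 1) {x y : ZMod p} (hx : x ≠ 0) (hy : y ≠ 0)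
    (hxy : ((y, 0) : ZMod p × ZMod p) ∉ orbit G (x, 0)) (g : G) :
    ∃ a b : ZMod p, ∀ z, g • z = a * z + b := by
  classical
  let A : Matrix (ZMod p) (ZMod p) (ZMod p) := fun u w => if (u, w) ∈ orbit G (x, 0) then 1 else 0
  -- All column sums of `A` are equal by transitivity, so those of `M` vanish.
  let M := A - (1 ᵥ* A) 0 • 1
  have hA (g : G) (u w : ZMod p) : A (g • u) (g • w) = A u w := by
    simp only [A, ← Prod.smul_mk, smul_mem_orbit_iff]
  have hM (g : G) (u w : ZMod p) : M (g • u) (g • w) = M u w := by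
    simp [M, Matrix.one_apply, hA]
  have hcol : 1 ᵥ* M = 0 := by
    rw [Matrix.vecMul_sub, Matrix.vecMul_smul, Matrix.vecMul_one, Matrix.vecMul_one_eq_const hA 0]
    ext; simp
  refine (isPrecompInvariant_polyFun_two hg₀ (φ := M.mulVecLin) (Matrix.mulVec_comp_smul hM)
    (range_mulVecLin_le_polyFun hcol) fun hle => ?_).exists_smul_eq_mul_add g
  obtain ⟨c, hc⟩ := mem_polyFun_one.1 (hle ⟨Pi.single 0 1, rfl⟩)
  have h : M x 0 = M y 0 := by
    simpa [Matrix.mulVec_single_one] using (congr_fun hc x).trans (congr_fun hc y).symm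
  have hMx : M x 0 = 1 := by
    simp only [M]
    rw [Matrix.sub_apply, Matrix.smul_apply, Matrix.one_apply_ne hx]
    simp [A, mem_orbit_self]
  have hMy : M y 0 = 0 := by
    simp only [M]
    rw [Matrix.sub_apply, Matrix.smul_apply, Matrix.one_apply_ne hy]
    simp [A, hxy]
  exact one_ne_zero (hMx.symm.trans (h.trans hMy))

end PolyFunInvariant

/-- **Burnside.** Let `G` act faithfully and transitively on a finite set `Ω` of prime
cardinality `p`. If `G` is not solvable, then the action of `G` on `Ω` is `2`-transitive. -/
theorem two_transitive_of_not_solvable_of_prime_degree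
    (G : Type*) [Group G] (Ω : Type*) [Fintype Ω]
    [MulAction G Ω] [FaithfulSMul G Ω] (htrans : MulAction.IsPretransitive G Ω)
    (p : ℕ) (hp : p.Prime) (hΩ : Fintype.card Ω = p)
    (hsolv : ¬ IsSolvable G) :
    ∀ a b c d : Ω, a ≠ b → c ≠ d → ∃ g : G, g • a = c ∧ g • b = d := by
  have : Fact p.Prime := ⟨hp⟩
  obtain ⟨g₀, ω, hper⟩ :=
    exists_minimalPeriod_eq_of_card_eq_prime (G := G) (Nat.card_eq_fintype_card.trans hΩ)
  obtain ⟨e, he⟩ := exists_equiv_zmod_smul_eq_add_one hper hΩ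
  let : MulAction G (ZMod p) := e.mulAction G
  have hsmul (g : G) (i : ZMod p) : g • i = e.symm (g • e i) := rfl
  have : FaithfulSMul G (ZMod p) :=
    ⟨fun h => eq_of_smul_eq_smul fun ω => by simpa [hsmul] using h (e.symm ω)⟩
  have : IsPretransitive G (ZMod p) :=
    ⟨fun i j => (exists_smul_eq G (e i) (e j)).imp fun g hg => by simp [hsmul, hg]⟩
  have hg₀ (i : ZMod p) : g₀ • i = i + 1 := by simp [hsmul, he]
  intro a b c d hab hcd
  obtain ⟨g, hga, hgb⟩ := exists_smul_eq_and_smul_eq_of_forall_mem_orbit (G := G) (0 : ZMod p)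
    (fun x y hx hy => by_contra fun hxy => hsolv <| isSolvable_of_forall_exists_smul_eq_mul_add <|
      exists_smul_eq_mul_add_of_notMem_orbit hg₀ hx hy hxy)
    (e.symm a) (e.symm b) (e.symm c) (e.symm d) (by simpa) (by simpa)
  exact ⟨g, by simpa [hsmul] using hga, by simpa [hsmul] using hgb⟩
end

section
/- Let q be a prime, let m be a primitive root modulo q (a generator of the cyclic group (ℤ/qℤ)ˣ), let n > 1 be a divisor of q − 1, let ζ_q = exp(2πi/q) ∈ ℂ, and set α_n = Σ_{j=0}^{(q−1)/n − 1} ζ_q^{m^{jn}}. Then ℚ(α_n) is the fixed field of σⁿ in ℚ(ζ_q), where σ is the automorphism of ℚ(ζ_q) with σ(ζ_q) = ζ_q^m; in particular, ℚ(α_n)/ℚ is a Galois extension of degree n with cyclic Galois group of order n. -/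
open Polynomial Complex IntermediateField

/-!
The conjugates of `ζ` are the primitive `q`-th roots of unity `ζ, ζ², …, ζ^(q-1)`, which are
linearly independent over `ℚ`: `ζ` generates a normal basis of `ℚ(ζ)/ℚ`. For such an element `x`
and a subgroup `H` of the Galois group, comparing coefficients shows that an automorphism `g`
fixes `∑_{h ∈ H} h x` only if `gH = H`, so the fixing group of `ℚ(∑_{h ∈ H} h x)` is `H` and
this field is the fixed field of `H`. As `m` is a primitive root, `σ` generates the cyclic Galois
group, `α_n` is the orbit sum of `ζ` under `⟨σⁿ⟩`, and the fixed field of this subgroup of index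
`n` is Galois over `ℚ` with cyclic group of order `n`.
-/

section OrbitSum

variable {K L : Type*} [Field K] [Field L] [Algebra K L]

theorem apply_sum_subgroup_of_mem {H : Subgroup Gal(L/K)} [Fintype H] (x : L) {h : Gal(L/K)}
    (hh : h ∈ H) : h (∑ h' : H, (h' : Gal(L/K)) x) = ∑ h' : H, (h' : Gal(L/K)) x := by
  rw [map_sum]
  exact Fintype.sum_equiv (Equiv.mulLeft ⟨h, hh⟩) _ _ fun _ => rfl

variable [FiniteDimensional K L]

theorem sum_subgroup_eq_sum_ite_smul (x : L) (H : Subgroup Gal(L/K)) [DecidablePred (· ∈ H)]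
    [Fintype H] :
    ∑ h : H, (h : Gal(L/K)) x = ∑ g : Gal(L/K), (if g ∈ H then (1 : K) else 0) • g x := by
  simp only [ite_smul, one_smul, zero_smul]
  rw [← Finset.sum_filter]
  exact (Finset.sum_subtype _ (fun g => by simp) fun g : Gal(L/K) => g x).symm

theorem mem_of_apply_sum_subgroup_eq {x : L} (hx : LinearIndependent K fun g : Gal(L/K) => g x)
    {H : Subgroup Gal(L/K)} [Fintype H] {g : Gal(L/K)}
    (hg : g (∑ h : H, (h : Gal(L/K)) x) = ∑ h : H, (h : Gal(L/K)) x) : g ∈ H := by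
  classical
  set f : Gal(L/K) → K := fun τ => if τ ∈ H then 1 else 0
  have hshift : g (∑ h : H, (h : Gal(L/K)) x) = ∑ τ, f (g⁻¹ * τ) • τ x := by
    rw [sum_subgroup_eq_sum_ite_smul, map_sum]
    refine Fintype.sum_equiv (Equiv.mulLeft g) _ _ fun τ => ?_
    simp [f, apply_ite g]
  rw [hshift, sum_subgroup_eq_sum_ite_smul] at hg
  -- the coefficient of `g x` on the left is `f 1 = 1`
  simpa [f, H.one_mem] using Fintype.linearIndependent_iffₛ.mp hx _ _ hg g

theorem fixingSubgroup_adjoin_sum_subgroup {x : L}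
    (hx : LinearIndependent K fun g : Gal(L/K) => g x) (H : Subgroup Gal(L/K)) [Fintype H] :
    K⟮∑ h : H, (h : Gal(L/K)) x⟯.fixingSubgroup = H := by
  refine le_antisymm (fun g hg => mem_of_apply_sum_subgroup_eq hx ?_) ?_
  · exact hg ⟨_, mem_adjoin_simple_self K _⟩
  · rw [← IntermediateField.le_iff_le, adjoin_simple_le_iff]
    exact fun h => apply_sum_subgroup_of_mem x h.2

theorem adjoin_sum_subgroup_eq_fixedField [IsGalois K L] {x : L}
    (hx : LinearIndependent K fun g : Gal(L/K) => g x) (H : Subgroup Gal(L/K)) [Fintype H] :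
    K⟮∑ h : H, (h : Gal(L/K)) x⟯ = fixedField H :=
  calc K⟮∑ h : H, (h : Gal(L/K)) x⟯
      = fixedField K⟮∑ h : H, (h : Gal(L/K)) x⟯.fixingSubgroup :=
        (IsGalois.fixedField_fixingSubgroup _).symm
    _ = fixedField H := by rw [fixingSubgroup_adjoin_sum_subgroup hx H]

end OrbitSum

theorem sum_zpowers_eq_sum_range {G M : Type*} [Group G] [AddCommMonoid M] {g : G}
    (hg : IsOfFinOrder g) [Fintype (Subgroup.zpowers g)] (f : G → M) :
    ∑ h : Subgroup.zpowers g, f h = ∑ j ∈ Finset.range (orderOf g), f (g ^ j) := by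
  rw [← Fin.sum_univ_eq_sum_range]
  exact (Fintype.sum_equiv (finEquivZPowers hg) _ _ fun _ => rfl).symm

theorem Subgroup.index_zpowers_pow {G : Type*} [Group G] [Finite G] {g : G}
    (hg : orderOf g = Nat.card G) {n : ℕ} (hn : n ∣ Nat.card G) : (zpowers (g ^ n)).index = n := by
  have hn0 : n ≠ 0 := by rintro rfl; exact Nat.card_pos.ne' (zero_dvd_iff.mp hn)
  have hcard := (zpowers (g ^ n)).card_mul_index
  rw [Nat.card_zpowers, orderOf_pow_of_dvd hn0 (hg ▸ hn), hg] at hcard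
  refine Nat.eq_of_mul_eq_mul_left
    (Nat.div_pos (Nat.le_of_dvd Nat.card_pos hn) (Nat.pos_of_ne_zero hn0)) ?_
  rw [hcard, Nat.div_mul_cancel hn]

theorem AlgEquiv.pow_apply_of_apply_eq_pow {R A : Type*} [CommSemiring R] [Semiring A]
    [Algebra R A] {f : A ≃ₐ[R] A} {x : A} {m : ℕ} (hf : f x = x ^ m) (k : ℕ) :
    (f ^ k) x = x ^ m ^ k := by
  induction k with
  | zero => simp
  | succ k ih => rw [pow_succ', AlgEquiv.mul_apply, ih, map_pow, hf, ← pow_mul, ← pow_succ']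

theorem IntermediateField.isGalois_and_isCyclic_of_algEquiv {K L F : Type*} [Field K] [Field L]
    [Field F] [Algebra K L] [Algebra K F] [IsGalois K L] [IsCyclic Gal(L/K)]
    (E : IntermediateField K L) (e : E ≃ₐ[K] F) : IsGalois K F ∧ IsCyclic Gal(F/K) :=
  have := IsAbelianGalois.of_isCyclic K L
  have : IsCyclic Gal(E/K) :=
    isCyclic_of_surjective (AlgEquiv.restrictNormalHom E) (AlgEquiv.restrictNormalHom_surjective L)
  ⟨.of_algEquiv e, isCyclic_of_surjective _ (AlgEquiv.autCongr e).surjective⟩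

theorem PowerBasis.linearIndependent_gen_pow_succ {K L : Type*} [Field K] [Field L]
    [Algebra K L] (pb : PowerBasis K L) (h : pb.gen ≠ 0) :
    LinearIndependent K fun i : Fin pb.dim => pb.gen ^ ((i : ℕ) + 1) := by
  have hker : LinearMap.ker (LinearMap.mulLeft K pb.gen) = ⊥ :=
    LinearMap.ker_eq_bot.mpr (mul_right_injective₀ h)
  have hshift : (fun i : Fin pb.dim => pb.gen ^ ((i : ℕ) + 1)) =
      LinearMap.mulLeft K pb.gen ∘ pb.basis := by
    ext i
    simp [pow_succ']
  rw [hshift]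
  exact pb.basis.linearIndependent.map' _ hker

namespace IsPrimitiveRoot

theorem isCyclotomicExtension_adjoin (K : Type*) {L : Type*} [Field K] [Field L] [Algebra K L]
    {n : ℕ} [NeZero n] {μ : L} (hμ : IsPrimitiveRoot μ n) : IsCyclotomicExtension {n} K K⟮μ⟯ := by
  change IsCyclotomicExtension {n} K K⟮μ⟯.toSubalgebra
  rw [adjoin_simple_toSubalgebra_of_isAlgebraic
    (hμ.isIntegral (NeZero.pos n)).tower_top.isAlgebraic]
  exact hμ.adjoin_isCyclotomicExtension K

theorem coe_autToPow_of_apply_eq_pow (K : Type*) {L : Type*} [CommRing K] [CommRing L]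
    [IsDomain L] [Algebra K L] {n : ℕ} [NeZero n] {μ : L} (hμ : IsPrimitiveRoot μ n)
    {f : L ≃ₐ[K] L} {m : ℕ} (hf : f μ = μ ^ m) : (hμ.autToPow K f : ZMod n) = m := by
  have hpow : μ ^ (hμ.autToPow K f : ZMod n).val = μ ^ m := by rw [hμ.autToPow_spec K, hf]
  rw [(hμ.isOfFinOrder (NeZero.ne n)).pow_eq_pow_iff_modEq, ← hμ.eq_orderOf] at hpow
  rw [← ZMod.natCast_zmod_val (hμ.autToPow K f : ZMod n), ZMod.natCast_eq_natCast_iff]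
  exact hpow

theorem orderOf_algEquiv (K : Type*) {L : Type*} [Field K] [CommRing L] [IsDomain L]
    [Algebra K L] {n : ℕ} [NeZero n] [IsCyclotomicExtension {n} K L] {μ : L}
    (hμ : IsPrimitiveRoot μ n) {σ : Gal(L/K)} {m : ℕ} (hσ : σ μ = μ ^ m) :
    orderOf σ = orderOf (m : ZMod n) := by
  rw [← orderOf_injective _ (hμ.autToPow_injective K) σ, ← orderOf_units,
    hμ.coe_autToPow_of_apply_eq_pow K hσ]

theorem linearIndependent_algEquiv_apply {K L : Type*} [Field K] [Field L] [Algebra K L]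
    {p : ℕ} [hp : Fact p.Prime] [IsCyclotomicExtension {p} K L] {μ : L}
    (hμ : IsPrimitiveRoot μ p) (hirr : Irreducible (cyclotomic p K)) :
    LinearIndependent K fun g : Gal(L/K) => g μ := by
  set pb := hμ.powerBasis K
  have hdim : pb.dim = p - 1 := by
    rw [← pb.finrank, IsCyclotomicExtension.finrank L hirr, Nat.totient_prime hp.out]
  have hval_pos (g : Gal(L/K)) : 0 < (hμ.autToPow K g : ZMod p).val :=
    Nat.pos_of_ne_zero fun h => (hμ.autToPow K g).ne_zero ((ZMod.val_eq_zero _).mp h)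
  -- `g μ = μ ^ (exponent g + 1)`, and the exponents `0, …, p - 2` index the power basis
  let exponent (g : Gal(L/K)) : Fin pb.dim :=
    ⟨(hμ.autToPow K g : ZMod p).val - 1, by
      have := ZMod.val_lt (hμ.autToPow K g : ZMod p)
      have := hval_pos g
      rw [hdim]
      omega⟩
  have hexponent : Function.Injective exponent := by
    intro g g' h
    have := hval_pos g
    have := hval_pos g'
    refine hμ.autToPow_injective K (Units.ext (ZMod.val_injective p ?_))
    have := congrArg Fin.val h
    simp only [exponent] at this
    omega
  convert (pb.linearIndependent_gen_pow_succ (hμ.ne_zero hp.out.ne_zero)).comp _ hexponent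
    using 1
  funext g
  simp only [Function.comp_apply, exponent, IsPrimitiveRoot.powerBasis_gen, pb]
  rw [← hμ.autToPow_spec K g, Nat.sub_add_cancel (hval_pos g)]

end IsPrimitiveRoot

theorem gaussian_period_generates_fixed_field_general
    (q : ℕ) (hq : q.Prime) (m : ℕ) (hm : orderOf (m : ZMod q) = q - 1)
    (n : ℕ) (hnq : n ∣ q - 1)
    (ζ : ℂ) (hζ : ζ = Complex.exp (2 * Real.pi * Complex.I / q))
    (α : ℂ) (hα : α = ∑ j ∈ Finset.range ((q - 1) / n), ζ ^ (m ^ (j * n)))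
    (σ : (IntermediateField.adjoin ℚ ({ζ} : Set ℂ)) ≃ₐ[ℚ]
      (IntermediateField.adjoin ℚ ({ζ} : Set ℂ)))
    (hσ : σ ⟨ζ, IntermediateField.mem_adjoin_simple_self ℚ ζ⟩ =
      ⟨ζ, IntermediateField.mem_adjoin_simple_self ℚ ζ⟩ ^ m) :
    IntermediateField.adjoin ℚ ({α} : Set ℂ) =
      IntermediateField.map (IntermediateField.adjoin ℚ ({ζ} : Set ℂ)).val
        (IntermediateField.fixedField (Subgroup.zpowers (σ ^ n))) ∧
    IsGalois ℚ (IntermediateField.adjoin ℚ ({α} : Set ℂ)) ∧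
    Module.finrank ℚ (IntermediateField.adjoin ℚ ({α} : Set ℂ)) = n ∧
    IsCyclic ((IntermediateField.adjoin ℚ ({α} : Set ℂ)) ≃ₐ[ℚ]
      (IntermediateField.adjoin ℚ ({α} : Set ℂ))) := by
  classical
  have := Fact.mk hq
  have hζ_prim : IsPrimitiveRoot ζ q := hζ ▸ Complex.isPrimitiveRoot_exp q hq.ne_zero
  have hζ'_prim : IsPrimitiveRoot (AdjoinSimple.gen ℚ ζ) q :=
    IsPrimitiveRoot.coe_submonoidClass_iff.mp hζ_prim
  have : IsCyclotomicExtension {q} ℚ ℚ⟮ζ⟯ := hζ_prim.isCyclotomicExtension_adjoin ℚ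
  have := IsCyclotomicExtension.isGalois {q} ℚ ℚ⟮ζ⟯
  have := IsCyclotomicExtension.finiteDimensional {q} ℚ ℚ⟮ζ⟯
  have hirr := cyclotomic.irreducible_rat hq.pos
  have hcard : Nat.card Gal(ℚ⟮ζ⟯/ℚ) = q - 1 := by
    rw [IsGalois.card_aut_eq_finrank, IsCyclotomicExtension.finrank _ hirr, Nat.totient_prime hq]
  have horder : orderOf σ = Nat.card Gal(ℚ⟮ζ⟯/ℚ) :=
    (hζ'_prim.orderOf_algEquiv ℚ hσ).trans (hm.trans hcard.symm)
  have := isCyclic_of_orderOf_eq_card σ horder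
  set H := Subgroup.zpowers (σ ^ n)
  have hα_orbit : α = ((∑ h : H, (h : Gal(ℚ⟮ζ⟯/ℚ)) (AdjoinSimple.gen ℚ ζ) : ℚ⟮ζ⟯) : ℂ) := by
    have hn0 : n ≠ 0 := by
      rintro rfl
      exact (Nat.sub_pos_of_lt hq.one_lt).ne' (zero_dvd_iff.mp hnq)
    rw [sum_zpowers_eq_sum_range (isOfFinOrder_of_finite (σ ^ n)) fun g => g (AdjoinSimple.gen ℚ ζ),
      orderOf_pow_of_dvd hn0 (horder ▸ hcard ▸ hnq), horder, hcard, hα]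
    push_cast
    refine Finset.sum_congr rfl fun j _ => ?_
    rw [← pow_mul, mul_comm]
    exact congrArg Subtype.val (AlgEquiv.pow_apply_of_apply_eq_pow hσ (n * j)).symm
  -- `ℚ⟮ζ⟯` carries two `Algebra ℚ` instances, equal only up to unfolding, so the remaining
  -- steps go through `exact` rather than `rw` or instance search
  have hfixed : ℚ⟮α⟯ = (fixedField H).map ℚ⟮ζ⟯.val := by
    have h := adjoin_map (F := ℚ)
      (S := {∑ h : H, (h : Gal(ℚ⟮ζ⟯/ℚ)) (AdjoinSimple.gen ℚ ζ)}) ℚ⟮ζ⟯.val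
    rw [Set.image_singleton] at h
    rw [hα_orbit]
    exact h.symm.trans (congrArg _
      (adjoin_sum_subgroup_eq_fixedField (hζ'_prim.linearIndependent_algEquiv_apply hirr) H))
  let e : fixedField H ≃ₐ[ℚ] ℚ⟮α⟯ := (equivMap _ _).trans (equivOfEq hfixed.symm)
  obtain ⟨hGal, hCyc⟩ := (fixedField H).isGalois_and_isCyclic_of_algEquiv e
  refine ⟨hfixed, hGal, ?_, hCyc⟩
  rw [← e.toLinearEquiv.finrank_eq, finrank_eq_fixingSubgroup_index, fixingSubgroup_fixedField,
    Subgroup.index_zpowers_pow horder (hcard ▸ hnq)]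

/-- Let `q` be a prime, `m` a primitive root modulo `q`, `n > 1` a divisor of `q - 1`,
`ζ_q = exp(2πi/q)`, and let `α_n = Σ_{j=0}^{(q-1)/n - 1} ζ_q^(m^(j*n))` be the Gaussian
period of degree `n`. If `σ` is the automorphism of `K = ℚ(ζ_q)` with `σ(ζ_q) = ζ_q^m`,
then `ℚ(α_n)` is the fixed field of `σ^n` in `K`; in particular `ℚ(α_n)/ℚ` is a Galois
extension of degree `n` with cyclic Galois group of order `n`. -/
theorem gaussian_period_generates_fixed_field
    (q : ℕ) (hq : q.Prime) (m : ℕ) (hm : orderOf (m : ZMod q) = q - 1)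
    (n : ℕ) (hn : 1 < n) (hnq : n ∣ q - 1)
    (ζ : ℂ) (hζ : ζ = Complex.exp (2 * Real.pi * Complex.I / q))
    (α : ℂ) (hα : α = ∑ j ∈ Finset.range ((q - 1) / n), ζ ^ (m ^ (j * n)))
    (σ : (IntermediateField.adjoin ℚ ({ζ} : Set ℂ)) ≃ₐ[ℚ]
      (IntermediateField.adjoin ℚ ({ζ} : Set ℂ)))
    (hσ : σ ⟨ζ, IntermediateField.mem_adjoin_simple_self ℚ ζ⟩ =
      ⟨ζ, IntermediateField.mem_adjoin_simple_self ℚ ζ⟩ ^ m) :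
    IntermediateField.adjoin ℚ ({α} : Set ℂ) =
      IntermediateField.map (IntermediateField.adjoin ℚ ({ζ} : Set ℂ)).val
        (IntermediateField.fixedField (Subgroup.zpowers (σ ^ n))) ∧
    IsGalois ℚ (IntermediateField.adjoin ℚ ({α} : Set ℂ)) ∧
    Module.finrank ℚ (IntermediateField.adjoin ℚ ({α} : Set ℂ)) = n ∧
    IsCyclic ((IntermediateField.adjoin ℚ ({α} : Set ℂ)) ≃ₐ[ℚ]
      (IntermediateField.adjoin ℚ ({α} : Set ℂ))) :=
  gaussian_period_generates_fixed_field_general q hq m hm n hnq ζ hζ α hα σ hσ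
end
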